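/- arXiv:2512.02821 — 3 statements merged into one kernel-verified Lean document; each statement's English description precedes it below -/
import Mathlib

section
/- Let R be a ring with a complete set of orthogonal idempotents e_0, …, e_{n-1} which is a piecewise domain, i.e., for all indices i, k, j and all a ∈ e_i R e_k, b ∈ e_k R e_j, if a b = 0 then a = 0 or b = 0. Let σ be a ring automorphism of R permuting the idempotents (σ(e_i) = e_{π(i)} for a permutation π) and δ a σ-derivation. Then the Ore extension S = R[x; σ, δ] is a piecewise domain with respect to the same set of idempotents e_0, …, e_{n-1}. -/
/-- Let `R` be a piecewise domain with respect to a complete set of orthogonal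
idempotents `e_0, …, e_{n-1}`, `σ` a ring automorphism of `R` permuting the
idempotents, and `δ` a `σ`-derivation.  Let `S = R[x; σ, δ]` be the Ore extension,
presented abstractly: a ring `S` with a ring homomorphism `ι : R →+* S` and an
element `x` satisfying `x·ι(r) = ι(σ r)·x + ι(δ r)`, such that every element of `S`
is uniquely of the form `∑ ι(r_u) x^u`.  Then `S` is a piecewise domain with respect
to the idempotents `ι(e_0), …, ι(e_{n-1})`. -/
theorem stmt3 {R S : Type*} [Ring R] [Ring S] (n : ℕ) (e : Fin n → R)
    (horth : ∀ i j, e i * e j = if i = j then e i else 0)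
    (hsum : ∑ i, e i = 1)
    (hpwd : ∀ (i k j : Fin n) (a b : R),
      e i * a * e k = a → e k * b * e j = b → a * b = 0 → a = 0 ∨ b = 0)
    (σ : R ≃+* R) (π : Equiv.Perm (Fin n)) (hσe : ∀ i, σ (e i) = e (π i))
    (δ : R →+ R) (hδ : ∀ r r', δ (r * r') = σ r * δ r' + δ r * r')
    (ι : R →+* S) (x : S)
    (hcomm : ∀ r, x * ι r = ι (σ r) * x + ι (δ r))
    (hbasis : Function.Bijective fun f : ℕ →₀ R => f.sum fun u r => ι r * x ^ u) :
    ∀ (i k j : Fin n) (a b : S),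
      ι (e i) * a * ι (e k) = a → ι (e k) * b * ι (e j) = b → a * b = 0 →
        a = 0 ∨ b = 0 := by
  classical
  intro i k j a b ha hb hab
  by_cases hA : a = 0
  · exact Or.inl hA
  by_cases hB : b = 0
  · exact Or.inr hB
  exfalso
  -- basic setup : coefficients
  set Φ : (ℕ →₀ R) → S := fun f => f.sum fun u r => ι r * x ^ u with hΦdef
  set E : (ℕ →₀ R) ≃ S := Equiv.ofBijective _ hbasis with hEdef
  set c : S → ℕ →₀ R := fun s => E.symm s with hcdef
  have hEΦ : ∀ f, E f = Φ f := fun _ => rfl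
  have hΦc : ∀ s, Φ (c s) = s := fun s => E.apply_symm_apply s
  have hcΦ : ∀ f, c (Φ f) = f := fun f => E.symm_apply_apply f
  have hΦ0 : Φ 0 = 0 := Finsupp.sum_zero_index
  have hΦadd : ∀ f g, Φ (f + g) = Φ f + Φ g := fun f g =>
    Finsupp.sum_add_index' (by simp) (by intro u r r'; rw [map_add, add_mul])
  have hΦsingle : ∀ u r, Φ (Finsupp.single u r) = ι r * x ^ u := fun u r =>
    Finsupp.sum_single_index (by simp)
  have hc0 : c 0 = 0 := by rw [← hΦ0, hcΦ]
  have hcadd : ∀ s t, c (s + t) = c s + c t := by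
    intro s t
    apply E.injective
    rw [hEΦ, hEΦ, hΦadd, hΦc, hΦc, hΦc]
  have hczero : ∀ s : S, s ≠ 0 → c s ≠ 0 := by
    intro s hs hcs
    exact hs (by rw [← hΦc s, hcs, hΦ0])
  have hcsingle : ∀ u r, c (ι r * x ^ u) = Finsupp.single u r := fun u r => by
    rw [← hΦsingle, hcΦ]
  -- left multiplication by ι r
  have hmulleft : ∀ (r : R) (s : S),
      ι r * s = Φ ((c s).mapRange (fun z => r * z) (mul_zero r)) := by
    intro r s
    conv_lhs => rw [← hΦc s]
    rw [hΦdef]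
    simp only
    rw [Finsupp.mul_sum, Finsupp.sum_mapRange_index (by simp)]
    simp only [map_mul, mul_assoc]
  have hcoeffleft : ∀ (r : R) (s : S) (u : ℕ), c (ι r * s) u = r * c s u := by
    intro r s u
    rw [hmulleft, hcΦ, Finsupp.mapRange_apply]
  -- right multiplication by x ^ v
  have hshift : ∀ (s : S) (v : ℕ),
      s * x ^ v = Φ (Finsupp.mapDomain (· + v) (c s)) := by
    intro s v
    conv_lhs => rw [← hΦc s]
    rw [hΦdef]
    simp only
    rw [Finsupp.sum_mul, Finsupp.sum_mapDomain_index (by simp)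
      (by intro u r r'; rw [map_add, add_mul])]
    refine Finset.sum_congr rfl fun u _ => ?_
    beta_reduce
    rw [pow_add, mul_assoc]
  have hshiftbound : ∀ (s : S) (v u : ℕ), (∀ w, u ≤ w → c s w = 0) →
      ∀ w, u + v ≤ w → c (s * x ^ v) w = 0 := by
    intro s v u hs w hw
    rw [hshift, hcΦ]
    have hv : v ≤ w := le_trans (Nat.le_add_left v u) hw
    have hwv : w = (w - v) + v := (Nat.sub_add_cancel hv).symm
    rw [hwv, Finsupp.mapDomain_apply (add_left_injective v)]
    exact hs _ (by omega)
  -- left multiplication by x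
  have hxmul : ∀ s : S, x * s =
      Φ (Finsupp.mapDomain (· + 1) ((c s).mapRange σ (map_zero σ)) +
         (c s).mapRange δ (map_zero δ)) := by
    intro s
    rw [hΦadd]
    conv_lhs => rw [← hΦc s]
    rw [hΦdef]
    simp only
    rw [Finsupp.mul_sum,
      Finsupp.sum_mapDomain_index (by simp) (by intro u r r'; rw [map_add, add_mul]),
      Finsupp.sum_mapRange_index (by simp), Finsupp.sum_mapRange_index (by simp),
      ← Finsupp.sum_add]
    refine Finset.sum_congr rfl fun u _ => ?_
    beta_reduce
    rw [← mul_assoc, hcomm, add_mul, mul_assoc, ← pow_succ']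
  have hxbound : ∀ (s : S) (u : ℕ), (∀ w, u ≤ w → c s w = 0) →
      ∀ w, u + 1 ≤ w → c (x * s) w = 0 := by
    intro s u hs w hw
    rw [hxmul, hcΦ, Finsupp.add_apply, Finsupp.mapRange_apply]
    have hwv : w = (w - 1) + 1 := by omega
    rw [hwv, Finsupp.mapDomain_apply (add_left_injective 1), Finsupp.mapRange_apply,
      hs _ (by omega), hs _ (by omega), map_zero, map_zero, add_zero]
  -- iterates of σ
  set τ : ℕ → R → R := fun u => (⇑σ)^[u] with hτdef
  have hτ0 : ∀ r, τ 0 r = r := fun _ => rfl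
  have hτsucc : ∀ u r, τ (u + 1) r = σ (τ u r) := fun u r =>
    Function.iterate_succ_apply' _ _ _
  have hτzero : ∀ u, τ u 0 = 0 := by
    intro u; induction u with
    | zero => rfl
    | succ u ih => rw [hτsucc, ih, map_zero]
  have hτmul : ∀ u r r', τ u (r * r') = τ u r * τ u r' := by
    intro u; induction u with
    | zero => intro r r'; rfl
    | succ u ih => intro r r'; rw [hτsucc, ih, map_mul, hτsucc, hτsucc]
  have hτinj : ∀ u r, τ u r = 0 → r = 0 := by
    intro u; induction u with
    | zero => intro r h; exact h
    | succ u ih =>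
      intro r h
      rw [hτsucc] at h
      refine ih r ?_
      have := σ.injective (a₁ := τ u r) (a₂ := 0)
      rw [map_zero] at this
      exact this h
  have hτe : ∀ (u : ℕ) (k0 : Fin n), ∃ k', τ u (e k0) = e k' := by
    intro u; induction u with
    | zero => intro k0; exact ⟨k0, rfl⟩
    | succ u ih =>
      intro k0
      obtain ⟨k', h⟩ := ih k0
      exact ⟨π k', by rw [hτsucc, h, hσe]⟩
  -- x ^ u * ι r = ι (τ u r) * x ^ u + lower
  have hxn : ∀ (u : ℕ) (r : R), ∃ t : S,
      x ^ u * ι r = ι (τ u r) * x ^ u + t ∧ ∀ w, u ≤ w → c t w = 0 := by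
    intro u; induction u with
    | zero =>
      intro r
      refine ⟨0, by rw [hτ0, pow_zero, mul_one, one_mul, add_zero], ?_⟩
      intro w _
      rw [hc0]; rfl
    | succ u ih =>
      intro r
      obtain ⟨t, ht, htb⟩ := ih r
      refine ⟨ι (δ (τ u r)) * x ^ u + x * t, ?_, ?_⟩
      · rw [pow_succ', mul_assoc, ht, mul_add, ← mul_assoc x, hcomm, add_mul,
          mul_assoc, ← pow_succ', hτsucc, add_assoc]
      · intro w hw
        rw [hcadd, Finsupp.add_apply, hcsingle, Finsupp.single_apply,
          if_neg (by omega), hxbound t u htb w hw, add_zero]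
  -- key pairwise coefficient computation
  have hkey : ∀ (u v : ℕ) (r r' : R),
      (∀ w, u + v < w → c (ι r * x ^ u * (ι r' * x ^ v)) w = 0) ∧
      c (ι r * x ^ u * (ι r' * x ^ v)) (u + v) = r * τ u r' := by
    intro u v r r'
    obtain ⟨t, ht, htb⟩ := hxn u r'
    have hexp : ι r * x ^ u * (ι r' * x ^ v) =
        ι (r * τ u r') * x ^ (u + v) + ι r * (t * x ^ v) := by
      have h1 : x ^ u * (ι r' * x ^ v) = (ι (τ u r') * x ^ u + t) * x ^ v := by
        rw [← mul_assoc, ht]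
      rw [mul_assoc, h1, map_mul, pow_add]
      noncomm_ring
    have htvb : ∀ w, u + v ≤ w → c (t * x ^ v) w = 0 :=
      hshiftbound t v u htb
    constructor
    · intro w hw
      rw [hexp, hcadd, Finsupp.add_apply, hcsingle, Finsupp.single_apply,
        if_neg (by omega), hcoeffleft, htvb w (le_of_lt hw), mul_zero, add_zero]
    · rw [hexp, hcadd, Finsupp.add_apply, hcsingle, Finsupp.single_eq_same,
        hcoeffleft, htvb (u + v) le_rfl, mul_zero, add_zero]
  -- leading coefficient of a product
  have hlead : ∀ (s t : S) (m p : ℕ),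
      (∀ w, m < w → c s w = 0) → (∀ w, p < w → c t w = 0) →
      c (s * t) (m + p) = c s m * τ m (c t p) := by
    intro s t m p hsm htp
    have hst : s * t = ∑ u ∈ (c s).support, ∑ v ∈ (c t).support,
        ι (c s u) * x ^ u * (ι (c t v) * x ^ v) := by
      conv_lhs => rw [← hΦc s, ← hΦc t]
      rw [hΦdef]
      simp only [Finsupp.sum]
      rw [Finset.sum_mul]
      refine Finset.sum_congr rfl fun u _ => ?_
      rw [Finset.mul_sum]
    have hcsum : c (s * t) (m + p) = ∑ u ∈ (c s).support, ∑ v ∈ (c t).support,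
        c (ι (c s u) * x ^ u * (ι (c t v) * x ^ v)) (m + p) := by
      rw [hst]
      have hcfin : ∀ (F : Finset ℕ) (G : ℕ → S),
          c (∑ u ∈ F, G u) = ∑ u ∈ F, c (G u) := by
        intro F G
        induction F using Finset.induction_on with
        | empty => simpa using hc0
        | insert _ _ hnot ih => rw [Finset.sum_insert hnot, Finset.sum_insert hnot, hcadd, ih]
      rw [hcfin, Finset.sum_apply']
      refine Finset.sum_congr rfl fun u _ => ?_
      rw [hcfin, Finset.sum_apply']
    rw [hcsum]
    have hmem_s : ∀ u ∈ (c s).support, u ≤ m := by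
      intro u hu
      by_contra h
      exact (Finsupp.mem_support_iff.mp hu) (hsm u (by omega))
    have hmem_t : ∀ v ∈ (c t).support, v ≤ p := by
      intro v hv
      by_contra h
      exact (Finsupp.mem_support_iff.mp hv) (htp v (by omega))
    rw [Finset.sum_eq_single m]
    · rw [Finset.sum_eq_single p]
      · exact (hkey m p (c s m) (c t p)).2
      · intro v hv hvne
        have hvp : v ≤ p := hmem_t v hv
        exact (hkey m v (c s m) (c t v)).1 (m + p) (by omega)
      · intro hp
        rw [Finsupp.notMem_support_iff.mp hp, (hkey m p (c s m) 0).2, hτzero, mul_zero]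
    · intro u hu hune
      have hum : u ≤ m := hmem_s u hu
      refine Finset.sum_eq_zero fun v hv => ?_
      have hvp : v ≤ p := hmem_t v hv
      exact (hkey u v (c s u) (c t v)).1 (m + p) (by omega)
    · intro hm
      refine Finset.sum_eq_zero fun v hv => ?_
      rw [Finsupp.notMem_support_iff.mp hm]
      have := (hkey m v 0 (c t v)).2
      have h2 := (hkey m v 0 (c t v)).1
      -- coefficient of (ι 0 * ...) anything is 0
      rw [map_zero, zero_mul, zero_mul, hc0]
      rfl
  -- nonzero idempotents
  have hek : e k ≠ 0 := by
    intro h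
    exact hA (by rw [← ha, h, map_zero, mul_zero])
  have hejne : e j ≠ 0 := by
    intro h
    exact hB (by rw [← hb, h, map_zero, mul_zero])
  -- sandwich identities
  have hii : e i * e i = e i := by simpa using horth i i
  have hkk : e k * e k = e k := by simpa using horth k k
  have hjj : e j * e j = e j := by simpa using horth j j
  have haL : ι (e i) * a = a := by
    conv_lhs => rw [← ha]
    rw [← mul_assoc, ← mul_assoc, ← map_mul, hii, ha]
  have haR : a * ι (e k) = a := by
    conv_lhs => rw [← ha]
    rw [mul_assoc, ← map_mul, hkk, ha]
  have hbL : ι (e k) * b = b := by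
    conv_lhs => rw [← hb]
    rw [← mul_assoc, ← mul_assoc, ← map_mul, hkk, hb]
  have hbR : b * ι (e j) = b := by
    conv_lhs => rw [← hb]
    rw [mul_assoc, ← map_mul, hjj, hb]
  have hfa : ∀ u, e i * c a u = c a u := by
    intro u
    rw [← hcoeffleft (e i) a u, haL]
  have hgb : ∀ v, e k * c b v = c b v := by
    intro v
    rw [← hcoeffleft (e k) b v, hbL]
  -- leading degrees
  have hcane : (c a).support.Nonempty := Finsupp.support_nonempty_iff.mpr (hczero a hA)
  have hcbne : (c b).support.Nonempty := Finsupp.support_nonempty_iff.mpr (hczero b hB)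
  set m : ℕ := (c a).support.max' hcane with hmdef
  set p : ℕ := (c b).support.max' hcbne with hpdef
  have ham : c a m ≠ 0 := Finsupp.mem_support_iff.mp ((c a).support.max'_mem hcane)
  have hbp : c b p ≠ 0 := Finsupp.mem_support_iff.mp ((c b).support.max'_mem hcbne)
  have habound : ∀ w, m < w → c a w = 0 := by
    intro w hw
    rw [← Finsupp.notMem_support_iff]
    intro hmem
    exact absurd (Finset.le_max' _ w hmem) (by omega)
  have hbbound : ∀ w, p < w → c b w = 0 := by
    intro w hw
    rw [← Finsupp.notMem_support_iff]
    intro hmem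
    exact absurd (Finset.le_max' _ w hmem) (by omega)
  -- coefficient facts for ι (e k), ι (e j)
  have hceconst : ∀ r : R, c (ι r) = Finsupp.single 0 r := by
    intro r
    have : ι r = ι r * x ^ 0 := by rw [pow_zero, mul_one]
    rw [this, hcsingle]
  have hcebound : ∀ r : R, ∀ w, 0 < w → c (ι r) w = 0 := by
    intro r w hw
    rw [hceconst, Finsupp.single_apply, if_neg (by omega)]
  -- top coefficient right-sandwich
  have hfm : c a m * τ m (e k) = c a m := by
    have := hlead a (ι (e k)) m 0 habound (hcebound (e k))
    rw [haR, Nat.add_zero, hceconst, Finsupp.single_eq_same] at this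
    exact this.symm
  have hgp : c b p * τ p (e j) = c b p := by
    have := hlead b (ι (e j)) p 0 hbbound (hcebound (e j))
    rw [hbR, Nat.add_zero, hceconst, Finsupp.single_eq_same] at this
    exact this.symm
  -- the product of leading coefficients vanishes
  have hzero : c a m * τ m (c b p) = 0 := by
    have := hlead a b m p habound hbbound
    rw [hab, hc0] at this
    exact this.symm
  -- find idempotent indices
  obtain ⟨k', hk'⟩ := hτe m k
  obtain ⟨j₀, hj₀⟩ := hτe p j
  obtain ⟨j₁, hj₁⟩ := hτe m j₀
  -- apply piecewise-domain hypothesis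
  have hsand1 : e i * c a m * e k' = c a m := by
    rw [hfa m, ← hk', hfm]
  have hgpj : c b p * e j₀ = c b p := by rw [← hj₀, hgp]
  have hsand2 : e k' * τ m (c b p) * e j₁ = τ m (c b p) := by
    rw [← hk', ← hj₁, ← hτmul, ← hτmul, hgb p, hgpj]
  rcases hpwd i k' j₁ (c a m) (τ m (c b p)) hsand1 hsand2 hzero with h | h
  · exact ham h
  · exact hbp (hτinj m _ h)
end

section
/- Let H = H(α, β, γ) be a quiver down-up algebra with β_i = 0 for some i. Then the relation element r = d_{i-1} u_{i-1} − α_i u_i d_i − γ_i e_i ∈ e_i H e_i satisfies r · u_i = 0 and d_i · r = 0 with r ≠ 0 and u_i ≠ 0 and d_i ≠ 0; hence H is not a piecewise domain with respect to the vertex idempotents e_0, …, e_{n-1}. -/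
/-- Generators of the path algebra of the doubled `n`-cycle quiver:
vertices `e i`, arrows `u i : i → i+1` and `d i : i+1 → i`. -/
inductive DUGen (n : ℕ) : Type
  | e : ZMod n → DUGen n
  | u : ZMod n → DUGen n
  | d : ZMod n → DUGen n

variable (k : Type*) [Field k] (n : ℕ)

/-- The trivial path `e_i` in the free algebra. -/
def Ew (i : ZMod n) : FreeAlgebra k (DUGen n) := FreeAlgebra.ι k (DUGen.e i)
/-- The arrow `u_i : i → i+1` in the free algebra. -/
def Uw (i : ZMod n) : FreeAlgebra k (DUGen n) := FreeAlgebra.ι k (DUGen.u i)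
/-- The arrow `d_i : i+1 → i` in the free algebra. -/
def Dw (i : ZMod n) : FreeAlgebra k (DUGen n) := FreeAlgebra.ι k (DUGen.d i)

variable [NeZero n]

/-- The relations presenting the quiver down-up algebra `H(α,β,γ)`: the path algebra
relations for the doubled `n`-cycle quiver, together with the down-up relations
`d_{i-1}u_{i-1}u_i = α_i u_i d_i u_i + β_i u_i u_{i+1} d_{i+1} + γ_i u_i` and
`d_i d_{i-1} u_{i-1} = α_i d_i u_i d_i + β_i u_{i+1} d_{i+1} d_i + γ_i d_i`. -/
inductive DURel (α β γ : ZMod n → k) :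
    FreeAlgebra k (DUGen n) → FreeAlgebra k (DUGen n) → Prop
  | ortho (i j : ZMod n) :
      DURel α β γ (Ew k n i * Ew k n j) (if i = j then Ew k n i else 0)
  | total : DURel α β γ (∑ i : ZMod n, Ew k n i) 1
  | eu (i : ZMod n) : DURel α β γ (Ew k n i * Uw k n i) (Uw k n i)
  | ue (i : ZMod n) : DURel α β γ (Uw k n i * Ew k n (i+1)) (Uw k n i)
  | ed (i : ZMod n) : DURel α β γ (Ew k n (i+1) * Dw k n i) (Dw k n i)
  | de (i : ZMod n) : DURel α β γ (Dw k n i * Ew k n i) (Dw k n i)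
  | rel1 (i : ZMod n) : DURel α β γ (Dw k n (i-1) * Uw k n (i-1) * Uw k n i)
      (α i • (Uw k n i * Dw k n i * Uw k n i)
        + β i • (Uw k n i * Uw k n (i+1) * Dw k n (i+1)) + γ i • Uw k n i)
  | rel2 (i : ZMod n) : DURel α β γ (Dw k n i * Dw k n (i-1) * Uw k n (i-1))
      (α i • (Dw k n i * Uw k n i * Dw k n i)
        + β i • (Uw k n (i+1) * Dw k n (i+1) * Dw k n i) + γ i • Dw k n i)

/-- The quiver down-up algebra `H(α,β,γ)`. -/
abbrev Hdu (α β γ : ZMod n → k) := RingQuot (DURel k n α β γ)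

variable (α β γ : ZMod n → k)

/-- The image of the trivial path `e_i` in `H(α,β,γ)`. -/
def eH (i : ZMod n) : Hdu k n α β γ := RingQuot.mkAlgHom k (DURel k n α β γ) (Ew k n i)
/-- The image of the arrow `u_i` in `H(α,β,γ)`. -/
def uH (i : ZMod n) : Hdu k n α β γ := RingQuot.mkAlgHom k (DURel k n α β γ) (Uw k n i)
/-- The image of the arrow `d_i` in `H(α,β,γ)`. -/
def dH (i : ZMod n) : Hdu k n α β γ := RingQuot.mkAlgHom k (DURel k n α β γ) (Dw k n i)

/-!
With `β i = 0` the two down-up relations at `i` say exactly that `r * u i = 0` and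
`d i * r = 0`. Nonvanishing is witnessed by a Verma-type module: basis vectors `b m`, `m : ℕ`,
with `b m` at vertex `p - m`, `u` raising `m` and `d` lowering it with a scalar `λ m` (`weight`).
Taking `λ 0 = 0`, `λ 1 = c` and `λ (m + 2) = α j * λ (m + 1) + β j * λ m + γ j` with
`j = p - (m + 1)` is precisely what makes the down-up relations hold. For `p = i + 1` and
`c = 1` we get `u i (b 0) = b 1` and `d i (b 1) = b 0`; for `p = i` and `c = γ i + 1` we get
`r (b 0) = b 0`. So `r ∈ e_i H e_i` and `u i ∈ e_i H e_{i+1}` are nonzero with zero product.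
-/

namespace QuiverDownUp

variable {k : Type*} [Field k] {n : ℕ}

section Relations

variable [NeZero n] {α β γ : ZMod n → k}

local notation "𝐞" => eH k n α β γ
local notation "𝐮" => uH k n α β γ
local notation "𝐝" => dH k n α β γ

theorem eH_mul_eH (i j : ZMod n) : 𝐞 i * 𝐞 j = if i = j then 𝐞 i else 0 := by
  simpa [eH, apply_ite] using RingQuot.mkAlgHom_rel k (s := DURel k n α β γ) (DURel.ortho i j)

theorem eH_mul_uH (i : ZMod n) : 𝐞 i * 𝐮 i = 𝐮 i := by
  simpa [eH, uH] using RingQuot.mkAlgHom_rel k (s := DURel k n α β γ) (DURel.eu i)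

theorem uH_mul_eH (i : ZMod n) : 𝐮 i * 𝐞 (i + 1) = 𝐮 i := by
  simpa [eH, uH] using RingQuot.mkAlgHom_rel k (s := DURel k n α β γ) (DURel.ue i)

theorem eH_mul_dH (i : ZMod n) : 𝐞 (i + 1) * 𝐝 i = 𝐝 i := by
  simpa [eH, dH] using RingQuot.mkAlgHom_rel k (s := DURel k n α β γ) (DURel.ed i)

theorem dH_mul_eH (i : ZMod n) : 𝐝 i * 𝐞 i = 𝐝 i := by
  simpa [eH, dH] using RingQuot.mkAlgHom_rel k (s := DURel k n α β γ) (DURel.de i)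

theorem dH_mul_uH_mul_uH (i : ZMod n) :
    𝐝 (i - 1) * 𝐮 (i - 1) * 𝐮 i
      = α i • (𝐮 i * 𝐝 i * 𝐮 i) + β i • (𝐮 i * 𝐮 (i + 1) * 𝐝 (i + 1)) + γ i • 𝐮 i := by
  simpa [uH, dH] using RingQuot.mkAlgHom_rel k (s := DURel k n α β γ) (DURel.rel1 i)

theorem dH_mul_dH_mul_uH (i : ZMod n) :
    𝐝 i * 𝐝 (i - 1) * 𝐮 (i - 1)
      = α i • (𝐝 i * 𝐮 i * 𝐝 i) + β i • (𝐮 (i + 1) * 𝐝 (i + 1) * 𝐝 i) + γ i • 𝐝 i := by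
  simpa [uH, dH] using RingQuot.mkAlgHom_rel k (s := DURel k n α β γ) (DURel.rel2 i)

variable (α β γ) in
def relator (i : ZMod n) : Hdu k n α β γ :=
  𝐝 (i - 1) * 𝐮 (i - 1) - α i • (𝐮 i * 𝐝 i) - γ i • 𝐞 i

theorem relator_mul_uH {i : ZMod n} (hβ : β i = 0) : relator α β γ i * 𝐮 i = 0 := by
  simp only [relator, sub_mul, smul_mul_assoc, dH_mul_uH_mul_uH, hβ, eH_mul_uH]
  simp

theorem dH_mul_relator {i : ZMod n} (hβ : β i = 0) : 𝐝 i * relator α β γ i = 0 := by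
  simp only [relator, mul_sub, mul_smul_comm, ← mul_assoc, dH_mul_dH_mul_uH, hβ, dH_mul_eH]
  simp

theorem eH_mul_relator_mul_eH (i : ZMod n) : 𝐞 i * relator α β γ i * 𝐞 i = relator α β γ i := by
  obtain ⟨j, rfl⟩ : ∃ j, i = j + 1 := ⟨i - 1, by ring⟩
  simp only [relator, add_sub_cancel_right, mul_sub, sub_mul, mul_smul_comm, smul_mul_assoc,
    ← mul_assoc, eH_mul_dH, eH_mul_uH, eH_mul_eH, if_true]
  simp only [mul_assoc, uH_mul_eH, dH_mul_eH]

end Relations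

open Finsupp

section Verma

-- keeps `single m (x * y)` from being split into a pointwise product of finsupps
attribute [-simp] Finsupp.single_mul

theorem ext_single_one {f g : Module.End k (ℕ →₀ k)}
    (h : ∀ m, f (single m 1) = g (single m 1)) : f = g := by
  ext m : 2
  exact h m

variable (α β γ : ZMod n → k) (p : ZMod n) (c : k)

def weight : ℕ → k
  | 0 => 0
  | 1 => c
  | m + 2 => α (p - (m + 1 : ℕ)) * weight (m + 1) + β (p - (m + 1 : ℕ)) * weight m
      + γ (p - (m + 1 : ℕ))

noncomputable def vermaE (j : ZMod n) : Module.End k (ℕ →₀ k) :=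
  linearCombination k fun m => if p - m = j then single m 1 else 0

noncomputable def vermaU (j : ZMod n) : Module.End k (ℕ →₀ k) :=
  linearCombination k fun m => if p - m = j + 1 then single (m + 1) 1 else 0

noncomputable def vermaD (j : ZMod n) : Module.End k (ℕ →₀ k) :=
  linearCombination k fun
    | 0 => 0
    | m + 1 => if p - (m + 1 : ℕ) = j then single m (weight α β γ p c (m + 1)) else 0

variable {p c}

@[simp] theorem vermaE_single (j : ZMod n) (m : ℕ) (a : k) :
    vermaE p j (single m a) = if p - m = j then single m a else 0 := by
  simp [vermaE]

@[simp] theorem vermaU_single (j : ZMod n) (m : ℕ) (a : k) :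
    vermaU p j (single m a) = if p - m = j + 1 then single (m + 1) a else 0 := by
  simp [vermaU]

@[simp] theorem vermaD_single_zero (j : ZMod n) (a : k) : vermaD α β γ p c j (single 0 a) = 0 := by
  simp [vermaD]

@[simp] theorem vermaD_single_succ (j : ZMod n) (m : ℕ) (a : k) :
    vermaD α β γ p c j (single (m + 1) a)
      = if p - (m + 1) = j then single m (weight α β γ p c (m + 1) * a) else 0 := by
  simp [vermaD, mul_comm]

theorem weight_add_two (m : ℕ) :
    weight α β γ p c (m + 2) = α (p - (m + 1)) * weight α β γ p c (m + 1)
      + β (p - (m + 1)) * weight α β γ p c m + γ (p - (m + 1)) := by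
  simp [weight]

@[simp] theorem vermaU_vermaD_single (j : ZMod n) (m : ℕ) (a : k) :
    vermaU p j (vermaD α β γ p c j (single m a))
      = if p - m = j then single m (weight α β γ p c m * a) else 0 := by
  cases m with
  | zero => simp [weight]
  | succ m =>
    by_cases h : p - (m + 1) = j
    · have h' : p - m = j + 1 := by linear_combination h
      simp [h, h']
    · simp [h]

theorem vermaE_mul_vermaE (i j : ZMod n) :
    vermaE p i * vermaE p j = if i = j then (vermaE p i : Module.End k (ℕ →₀ k)) else 0 := by
  refine ext_single_one fun m => ?_
  split_ifs with hij
  · subst hij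
    by_cases h : p - m = i <;> simp [h]
  · by_cases h : p - m = j <;> simp [h, Ne.symm hij]

theorem sum_vermaE [NeZero n] : ∑ j : ZMod n, (vermaE p j : Module.End k (ℕ →₀ k)) = 1 :=
  ext_single_one fun m => by simp

theorem vermaE_mul_vermaU (j : ZMod n) :
    vermaE p j * vermaU p j = (vermaU p j : Module.End k (ℕ →₀ k)) := by
  refine ext_single_one fun m => ?_
  by_cases h : p - m = j + 1
  · have h1 : p - (m + 1) = j := by linear_combination h
    simp [h, h1]
  · simp [h]

theorem vermaU_mul_vermaE (j : ZMod n) :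
    vermaU p j * vermaE p (j + 1) = (vermaU p j : Module.End k (ℕ →₀ k)) := by
  refine ext_single_one fun m => ?_
  by_cases h : p - m = j + 1 <;> simp [h]

theorem vermaE_mul_vermaD (j : ZMod n) :
    vermaE p (j + 1) * vermaD α β γ p c j = vermaD α β γ p c j := by
  refine ext_single_one fun m => ?_
  rcases m with _ | m
  · simp
  by_cases h : p - (m + 1) = j
  · have h1 : p - m = j + 1 := by linear_combination h
    simp [h, h1]
  · simp [h]

theorem vermaD_mul_vermaE (j : ZMod n) : vermaD α β γ p c j * vermaE p j = vermaD α β γ p c j := by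
  refine ext_single_one fun m => ?_
  rcases m with _ | m
  · by_cases h : p = j <;> simp [h]
  · by_cases h : p - (m + 1) = j <;> simp [h]

theorem vermaD_vermaU_vermaU (j : ZMod n) :
    vermaD α β γ p c (j - 1) * vermaU p (j - 1) * vermaU p j
      = α j • (vermaU p j * vermaD α β γ p c j * vermaU p j)
        + β j • (vermaU p j * vermaU p (j + 1) * vermaD α β γ p c (j + 1))
        + γ j • vermaU p j := by
  refine ext_single_one fun m => ?_
  by_cases h : p - m = j + 1
  · have h1 : p - (m + 1) = j := by linear_combination h
    have h2 : p - (m + 1 + 1) = j - 1 := by linear_combination h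
    simp [h, h1, h2, weight_add_two]
  · simp [h]

theorem vermaD_vermaD_vermaU (j : ZMod n) :
    vermaD α β γ p c j * vermaD α β γ p c (j - 1) * vermaU p (j - 1)
      = α j • (vermaD α β γ p c j * vermaU p j * vermaD α β γ p c j)
        + β j • (vermaU p (j + 1) * vermaD α β γ p c (j + 1) * vermaD α β γ p c j)
        + γ j • vermaD α β γ p c j := by
  refine ext_single_one fun m => ?_
  rcases m with _ | m
  · by_cases h : p = j <;> simp [h]
  by_cases h : p - (m + 1) = j
  · have h1 : p - m = j + 1 := by linear_combination h
    have h2 : p - (m + 1 + 1) = j - 1 := by linear_combination h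
    simp [h, h1, h2, weight_add_two]
    simp only [← single_add]
    congr 1
    ring
  · simp [h]

variable (p c)

noncomputable def vermaGen : DUGen n → Module.End k (ℕ →₀ k)
  | .e j => vermaE p j
  | .u j => vermaU p j
  | .d j => vermaD α β γ p c j

variable [NeZero n]

theorem lift_vermaGen_respects ⦃x y : FreeAlgebra k (DUGen n)⦄ (h : DURel k n α β γ x y) :
    FreeAlgebra.lift k (vermaGen α β γ p c) x = FreeAlgebra.lift k (vermaGen α β γ p c) y := by
  cases h with
  | ortho i j => split_ifs with hij <;> simp [Ew, vermaGen, vermaE_mul_vermaE, hij]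
  | total => simp [Ew, vermaGen, sum_vermaE]
  | eu j => simp [Ew, Uw, vermaGen, vermaE_mul_vermaU]
  | ue j => simp [Ew, Uw, vermaGen, vermaU_mul_vermaE]
  | ed j => simp [Ew, Dw, vermaGen, vermaE_mul_vermaD]
  | de j => simp [Ew, Dw, vermaGen, vermaD_mul_vermaE]
  | rel1 j => simp [Uw, Dw, vermaGen, vermaD_vermaU_vermaU]
  | rel2 j => simp [Uw, Dw, vermaGen, vermaD_vermaD_vermaU]

noncomputable def vermaRep : Hdu k n α β γ →ₐ[k] Module.End k (ℕ →₀ k) :=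
  RingQuot.liftAlgHom k ⟨FreeAlgebra.lift k (vermaGen α β γ p c), lift_vermaGen_respects α β γ p c⟩

variable {p c}

@[simp] theorem vermaRep_eH (j : ZMod n) : vermaRep α β γ p c (eH k n α β γ j) = vermaE p j := by
  simp [vermaRep, eH, Ew, vermaGen]

@[simp] theorem vermaRep_uH (j : ZMod n) : vermaRep α β γ p c (uH k n α β γ j) = vermaU p j := by
  simp [vermaRep, uH, Uw, vermaGen]

@[simp] theorem vermaRep_dH (j : ZMod n) :
    vermaRep α β γ p c (dH k n α β γ j) = vermaD α β γ p c j := by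
  simp [vermaRep, dH, Dw, vermaGen]

end Verma

section Nonvanishing

variable [NeZero n] {α β γ : ZMod n → k}

theorem uH_ne_zero (i : ZMod n) : uH k n α β γ i ≠ 0 :=
  ne_zero_of_map (f := vermaRep α β γ (i + 1) 1) <| by
    rw [vermaRep_uH]
    exact DFunLike.ne_iff.mpr ⟨single 0 1, by simp⟩

theorem dH_ne_zero (i : ZMod n) : dH k n α β γ i ≠ 0 :=
  ne_zero_of_map (f := vermaRep α β γ (i + 1) 1) <| by
    rw [vermaRep_dH]
    exact DFunLike.ne_iff.mpr ⟨single 1 1, by simp [weight]⟩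

theorem relator_ne_zero (i : ZMod n) : relator α β γ i ≠ 0 :=
  ne_zero_of_map (f := vermaRep α β γ i (γ i + 1)) <| by
    refine DFunLike.ne_iff.mpr ⟨single 0 1, ?_⟩
    simp [relator, weight]

end Nonvanishing

end QuiverDownUp

/-- If `β_i = 0` for some `i`, then `r = d_{i-1}u_{i-1} − α_i u_i d_i − γ_i e_i`
satisfies `r·u_i = 0` and `d_i·r = 0` with `r, u_i, d_i` all nonzero; hence
`H(α,β,γ)` is not a piecewise domain with respect to the vertex idempotents. -/
theorem stmt10 (i : ZMod n) (hβ : β i = 0) :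
    (dH k n α β γ (i-1) * uH k n α β γ (i-1) - α i • (uH k n α β γ i * dH k n α β γ i)
        - γ i • eH k n α β γ i) * uH k n α β γ i = 0 ∧
    dH k n α β γ i * (dH k n α β γ (i-1) * uH k n α β γ (i-1)
        - α i • (uH k n α β γ i * dH k n α β γ i) - γ i • eH k n α β γ i) = 0 ∧
    (dH k n α β γ (i-1) * uH k n α β γ (i-1) - α i • (uH k n α β γ i * dH k n α β γ i)
        - γ i • eH k n α β γ i) ≠ 0 ∧
    uH k n α β γ i ≠ 0 ∧ dH k n α β γ i ≠ 0 ∧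
    ¬ (∀ (i' k' j' : ZMod n) (a b : Hdu k n α β γ),
        eH k n α β γ i' * a * eH k n α β γ k' = a →
        eH k n α β γ k' * b * eH k n α β γ j' = b →
        a * b = 0 → a = 0 ∨ b = 0) := by
  open QuiverDownUp in
  refine ⟨relator_mul_uH hβ, dH_mul_relator hβ, relator_ne_zero i, uH_ne_zero i, dH_ne_zero i, ?_⟩
  intro hdomain
  have hu : eH k n α β γ i * uH k n α β γ i * eH k n α β γ (i + 1) = uH k n α β γ i := by
    rw [eH_mul_uH, uH_mul_eH]
  exact (hdomain i i (i + 1) _ _ (eH_mul_relator_mul_eH i) hu (relator_mul_uH hβ)).elim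
    (relator_ne_zero i) (uH_ne_zero i)
end

section
/- Let n ≥ 1 and let α, β, γ ∈ k^n with β_i ≠ 0 for all i, over a field k. Define α'_i = −β_{n−i−1}^{-1} α_{n−i−1}, β'_i = β_{n−i−1}^{-1}, γ'_i = −β_{n−i−1}^{-1} γ_{n−i−1} (indices mod n). Then the assignment e_i ↦ e_{n−i}, u_i ↦ d_{n−i−1}, d_i ↦ u_{n−i−1} extends to a k-algebra isomorphism H(α, β, γ) → H(α', β', γ'). -/
variable (k : Type*) [Field k] (n : ℕ)

variable [NeZero n]

variable (α β γ : ZMod n → k)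

section Helpers

lemma rel_ortho (i j : ZMod n) :
    eH k n α β γ i * eH k n α β γ j = if i = j then eH k n α β γ i else 0 := by
  have h := RingQuot.mkAlgHom_rel k (DURel.ortho (k := k) (n := n) (α := α) (β := β) (γ := γ) i j)
  simpa [eH, apply_ite] using h

lemma rel_total : (∑ i : ZMod n, eH k n α β γ i) = 1 := by
  have h := RingQuot.mkAlgHom_rel k (DURel.total (k := k) (n := n) (α := α) (β := β) (γ := γ))
  simpa [eH] using h

lemma rel_eu (i : ZMod n) : eH k n α β γ i * uH k n α β γ i = uH k n α β γ i := by
  have h := RingQuot.mkAlgHom_rel k (DURel.eu (k := k) (n := n) (α := α) (β := β) (γ := γ) i)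
  simpa [eH, uH] using h

lemma rel_ue (i : ZMod n) : uH k n α β γ i * eH k n α β γ (i+1) = uH k n α β γ i := by
  have h := RingQuot.mkAlgHom_rel k (DURel.ue (k := k) (n := n) (α := α) (β := β) (γ := γ) i)
  simpa [eH, uH] using h

lemma rel_ed (i : ZMod n) : eH k n α β γ (i+1) * dH k n α β γ i = dH k n α β γ i := by
  have h := RingQuot.mkAlgHom_rel k (DURel.ed (k := k) (n := n) (α := α) (β := β) (γ := γ) i)
  simpa [eH, dH] using h

lemma rel_de (i : ZMod n) : dH k n α β γ i * eH k n α β γ i = dH k n α β γ i := by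
  have h := RingQuot.mkAlgHom_rel k (DURel.de (k := k) (n := n) (α := α) (β := β) (γ := γ) i)
  simpa [eH, dH] using h

lemma rel_one (i : ZMod n) :
    dH k n α β γ (i-1) * uH k n α β γ (i-1) * uH k n α β γ i
      = α i • (uH k n α β γ i * dH k n α β γ i * uH k n α β γ i)
        + β i • (uH k n α β γ i * uH k n α β γ (i+1) * dH k n α β γ (i+1))
        + γ i • uH k n α β γ i := by
  have h := RingQuot.mkAlgHom_rel k (DURel.rel1 (k := k) (n := n) (α := α) (β := β) (γ := γ) i)
  simpa [eH, uH, dH] using h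

lemma rel_two (i : ZMod n) :
    dH k n α β γ i * dH k n α β γ (i-1) * uH k n α β γ (i-1)
      = α i • (dH k n α β γ i * uH k n α β γ i * dH k n α β γ i)
        + β i • (uH k n α β γ (i+1) * dH k n α β γ (i+1) * dH k n α β γ i)
        + γ i • dH k n α β γ i := by
  have h := RingQuot.mkAlgHom_rel k (DURel.rel2 (k := k) (n := n) (α := α) (β := β) (γ := γ) i)
  simpa [eH, uH, dH] using h

/-- The reflection map on the free algebra. -/
def reflF : FreeAlgebra k (DUGen n) →ₐ[k] Hdu k n α β γ :=
  FreeAlgebra.lift k fun g => match g with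
    | .e i => eH k n α β γ (-i)
    | .u i => dH k n α β γ (-i-1)
    | .d i => uH k n α β γ (-i-1)

@[simp] lemma reflF_e (i : ZMod n) : reflF k n α β γ (Ew k n i) = eH k n α β γ (-i) := by
  simp [reflF, Ew, FreeAlgebra.lift_ι_apply]

@[simp] lemma reflF_u (i : ZMod n) : reflF k n α β γ (Uw k n i) = dH k n α β γ (-i-1) := by
  simp [reflF, Uw, FreeAlgebra.lift_ι_apply]

@[simp] lemma reflF_d (i : ZMod n) : reflF k n α β γ (Dw k n i) = uH k n α β γ (-i-1) := by
  simp [reflF, Dw, FreeAlgebra.lift_ι_apply]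

lemma reflF_rel (α' β' γ' : ZMod n → k)
    (hA : ∀ i, β i * α' (-i-1) = -α i)
    (hB : ∀ i, β i * β' (-i-1) = 1)
    (hG : ∀ i, β i * γ' (-i-1) = -γ i) :
    ∀ ⦃x y⦄, DURel k n α β γ x y → reflF k n α' β' γ' x = reflF k n α' β' γ' y := by
  intro x y h
  induction h with
  | ortho i j =>
      simp [apply_ite (reflF k n α' β' γ'), rel_ortho, neg_inj]
  | total =>
      rw [map_sum, map_one]
      simp only [reflF_e]
      rw [← rel_total k n α' β' γ']
      exact Fintype.sum_equiv (Equiv.neg (ZMod n)) _ _ (fun i => rfl)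
  | eu i =>
      rw [map_mul, reflF_e, reflF_u]
      have h := rel_ed k n α' β' γ' (-i-1)
      rwa [show (-i-1+1 : ZMod n) = -i by ring] at h
  | ue i =>
      rw [map_mul, reflF_u, reflF_e]
      have h := rel_de k n α' β' γ' (-i-1)
      rwa [show (-(i+1) : ZMod n) = -i-1 by ring]
  | ed i =>
      rw [map_mul, reflF_e, reflF_d]
      have h := rel_eu k n α' β' γ' (-i-1)
      rwa [show (-(i+1) : ZMod n) = -i-1 by ring]
  | de i =>
      rw [map_mul, reflF_d, reflF_e]
      have h := rel_ue k n α' β' γ' (-i-1)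
      rwa [show (-i-1+1 : ZMod n) = -i by ring] at h
  | rel1 i =>
      simp only [map_mul, map_add, map_smul, reflF_u, reflF_d]
      rw [show (-(i-1)-1 : ZMod n) = (-i-1)+1 by ring,
        show (-(i+1)-1 : ZMod n) = (-i-1)-1 by ring,
        rel_two k n α' β' γ' (-i-1)]
      simp only [smul_add, smul_smul, hA i, hB i, hG i, one_smul, neg_smul]
      abel
  | rel2 i =>
      simp only [map_mul, map_add, map_smul, reflF_u, reflF_d]
      rw [show (-(i-1)-1 : ZMod n) = (-i-1)+1 by ring,
        show (-(i+1)-1 : ZMod n) = (-i-1)-1 by ring,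
        rel_one k n α' β' γ' (-i-1)]
      simp only [smul_add, smul_smul, hA i, hB i, hG i, one_smul, neg_smul]
      abel

/-- The reflection algebra homomorphism. -/
def reflHom (α' β' γ' : ZMod n → k)
    (hA : ∀ i, β i * α' (-i-1) = -α i)
    (hB : ∀ i, β i * β' (-i-1) = 1)
    (hG : ∀ i, β i * γ' (-i-1) = -γ i) :
    Hdu k n α β γ →ₐ[k] Hdu k n α' β' γ' :=
  RingQuot.liftAlgHom k ⟨reflF k n α' β' γ', reflF_rel k n α β γ α' β' γ' hA hB hG⟩

lemma reflHom_e (α' β' γ' hA hB hG) (i : ZMod n) :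
    reflHom k n α β γ α' β' γ' hA hB hG (eH k n α β γ i) = eH k n α' β' γ' (-i) := by
  rw [eH, reflHom, RingQuot.liftAlgHom_mkAlgHom_apply, reflF_e]

lemma reflHom_u (α' β' γ' hA hB hG) (i : ZMod n) :
    reflHom k n α β γ α' β' γ' hA hB hG (uH k n α β γ i) = dH k n α' β' γ' (-i-1) := by
  rw [uH, reflHom, RingQuot.liftAlgHom_mkAlgHom_apply, reflF_u]

lemma reflHom_d (α' β' γ' hA hB hG) (i : ZMod n) :
    reflHom k n α β γ α' β' γ' hA hB hG (dH k n α β γ i) = uH k n α' β' γ' (-i-1) := by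
  rw [dH, reflHom, RingQuot.liftAlgHom_mkAlgHom_apply, reflF_d]


end Helpers

/-- Reflection isomorphism: assume `β_i ≠ 0` for all `i` and set
`α'_i = −β_{n−i−1}⁻¹ α_{n−i−1}`, `β'_i = β_{n−i−1}⁻¹`, `γ'_i = −β_{n−i−1}⁻¹ γ_{n−i−1}`
(indices mod `n`, so `n − i − 1 = −i−1`).  Then the assignment `e_i ↦ e_{n−i}`,
`u_i ↦ d_{n−i−1}`, `d_i ↦ u_{n−i−1}` extends to a `k`-algebra isomorphism
`H(α,β,γ) → H(α',β',γ')`. -/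
theorem stmt11 (hβ : ∀ i, β i ≠ 0) :
    ∃ π : Hdu k n α β γ ≃ₐ[k]
      Hdu k n (fun i => -(β (-i-1))⁻¹ * α (-i-1))
        (fun i => (β (-i-1))⁻¹)
        (fun i => -(β (-i-1))⁻¹ * γ (-i-1)),
    ∀ i : ZMod n,
      π (eH k n α β γ i)
          = eH k n (fun i => -(β (-i-1))⁻¹ * α (-i-1)) (fun i => (β (-i-1))⁻¹)
              (fun i => -(β (-i-1))⁻¹ * γ (-i-1)) (-i) ∧
      π (uH k n α β γ i)
          = dH k n (fun i => -(β (-i-1))⁻¹ * α (-i-1)) (fun i => (β (-i-1))⁻¹)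
              (fun i => -(β (-i-1))⁻¹ * γ (-i-1)) (-i-1) ∧
      π (dH k n α β γ i)
          = uH k n (fun i => -(β (-i-1))⁻¹ * α (-i-1)) (fun i => (β (-i-1))⁻¹)
              (fun i => -(β (-i-1))⁻¹ * γ (-i-1)) (-i-1) := by
  set A' : ZMod n → k := fun i => -(β (-i-1))⁻¹ * α (-i-1) with hA'
  set B' : ZMod n → k := fun i => (β (-i-1))⁻¹ with hB'
  set G' : ZMod n → k := fun i => -(β (-i-1))⁻¹ * γ (-i-1) with hG'
  have e0 : ∀ i : ZMod n, (-(-i-1)-1 : ZMod n) = i := fun i => by ring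
  have h1 : ∀ i, β i * A' (-i-1) = -α i := by
    intro i; simp only [hA', e0]; field_simp [hβ i]
  have h2 : ∀ i, β i * B' (-i-1) = 1 := by
    intro i; simp only [hB', e0]; field_simp [hβ i]
  have h3 : ∀ i, β i * G' (-i-1) = -γ i := by
    intro i; simp only [hG', e0]; field_simp [hβ i]
  have h1' : ∀ i, B' i * α (-i-1) = -A' i := by
    intro i; simp only [hA', hB']; ring
  have h2' : ∀ i, B' i * β (-i-1) = 1 := by
    intro i; simp only [hB']; exact inv_mul_cancel₀ (hβ _)
  have h3' : ∀ i, B' i * γ (-i-1) = -G' i := by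
    intro i; simp only [hG', hB']; ring
  let φ := reflHom k n α β γ A' B' G' h1 h2 h3
  let ψ := reflHom k n A' B' G' α β γ h1' h2' h3'
  have hcomp1 : φ.comp ψ = AlgHom.id k _ := by
    apply RingQuot.ringQuot_ext'
    apply FreeAlgebra.hom_ext
    funext g
    cases g with
    | e i =>
        show φ (ψ (eH k n A' B' G' i)) = eH k n A' B' G' i
        rw [reflHom_e, reflHom_e, neg_neg]
    | u i =>
        show φ (ψ (uH k n A' B' G' i)) = uH k n A' B' G' i
        rw [reflHom_u, reflHom_d, e0]
    | d i =>
        show φ (ψ (dH k n A' B' G' i)) = dH k n A' B' G' i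
        rw [reflHom_d, reflHom_u, e0]
  have hcomp2 : ψ.comp φ = AlgHom.id k _ := by
    apply RingQuot.ringQuot_ext'
    apply FreeAlgebra.hom_ext
    funext g
    cases g with
    | e i =>
        show ψ (φ (eH k n α β γ i)) = eH k n α β γ i
        rw [reflHom_e, reflHom_e, neg_neg]
    | u i =>
        show ψ (φ (uH k n α β γ i)) = uH k n α β γ i
        rw [reflHom_u, reflHom_d, e0]
    | d i =>
        show ψ (φ (dH k n α β γ i)) = dH k n α β γ i
        rw [reflHom_d, reflHom_u, e0]
  refine ⟨AlgEquiv.ofAlgHom φ ψ hcomp1 hcomp2, fun i => ?_⟩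
  exact ⟨reflHom_e k n α β γ A' B' G' h1 h2 h3 i,
    reflHom_u k n α β γ A' B' G' h1 h2 h3 i,
    reflHom_d k n α β γ A' B' G' h1 h2 h3 i⟩
end
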